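/- Let M be a rank three positive definite lattice containing a distinguished element 𝔬. Then disc(M) ≡ 0 or 1 (mod 4). -/

import Mathlib

/-!
For `x ∈ M`, the vector `3x - (x.𝔬)𝔬` is orthogonal to `𝔬`, so it has even norm. Since `(𝔬.𝔬) = 3`
is not divisible by `4`, some coordinate `v k` of `𝔬` is odd. The Gram matrix `G` and the Gram
matrix `P` of the projections `3eᵢ - (eᵢ.𝔬)𝔬` satisfy `adj(P)ₖₖ = 27 (v k)² det G`; the left side is
the determinant of a `2 × 2` matrix with even diagonal, hence `≡ -c²  (mod 4)`, so `det G ≡ c²`.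
-/

open Matrix

theorem Int.sq_emod_four_eq_zero_or_one (c : ℤ) : c ^ 2 % 4 = 0 ∨ c ^ 2 % 4 = 1 := by
  rcases Int.even_or_odd c with ⟨e, rfl⟩ | hc
  · left
    ring_nf
    omega
  · exact Or.inr (Int.sq_mod_four_eq_one_of_odd hc)

namespace Matrix

section

variable {ι : Type*} [Fintype ι]

theorem IsSymm.dotProduct_mulVec_comm {α : Type*} [CommSemiring α] {G : Matrix ι ι α}
    (hG : G.IsSymm) (x y : ι → α) : x ⬝ᵥ G *ᵥ y = y ⬝ᵥ G *ᵥ x := by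
  rw [dotProduct_mulVec, ← mulVec_transpose, hG.eq, dotProduct_comm]

theorem exists_odd_of_not_four_dvd_dotProduct_mulVec (G : Matrix ι ι ℤ) {v : ι → ℤ}
    (hv : ¬ 4 ∣ v ⬝ᵥ G *ᵥ v) : ∃ k, Odd (v k) := by
  by_contra! hodd
  have hv2 : v = (2 : ℤ) • fun k => v k / 2 := by
    ext k
    have := Int.even_iff.mp (Int.not_odd_iff_even.mp (hodd k))
    simp only [Pi.smul_apply, smul_eq_mul]
    omega
  rw [hv2, mulVec_smul, smul_dotProduct, dotProduct_smul, smul_smul] at hv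
  exact hv (Dvd.intro _ rfl)

/-- `3x - (x.v)v`, which is orthogonal to `v` when `(v.v) = 3`. -/
def projOrth (G : Matrix ι ι ℤ) (v x : ι → ℤ) : ι → ℤ :=
  (3 : ℤ) • x - (x ⬝ᵥ G *ᵥ v) • v

variable {G : Matrix ι ι ℤ} {v : ι → ℤ}

theorem projOrth_dotProduct_mulVec (hv : v ⬝ᵥ G *ᵥ v = 3) (x : ι → ℤ) :
    projOrth G v x ⬝ᵥ G *ᵥ v = 0 := by
  simp only [projOrth, sub_dotProduct, smul_dotProduct, hv, smul_eq_mul]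
  ring

theorem projOrth_dotProduct_mulVec_projOrth (hG : G.IsSymm) (hv : v ⬝ᵥ G *ᵥ v = 3)
    (x y : ι → ℤ) :
    projOrth G v x ⬝ᵥ G *ᵥ projOrth G v y =
      9 * (x ⬝ᵥ G *ᵥ y) - 3 * (x ⬝ᵥ G *ᵥ v) * (y ⬝ᵥ G *ᵥ v) := by
  simp only [projOrth, mulVec_sub, mulVec_smul, dotProduct_sub, sub_dotProduct, dotProduct_smul,
    smul_dotProduct, hv, hG.dotProduct_mulVec_comm v, smul_eq_mul]
  ring

end

theorem adjugate_gram_projOrth_single (G : Matrix (Fin 3) (Fin 3) ℤ) (hG : G.IsSymm)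
    {v : Fin 3 → ℤ} (hv : v ⬝ᵥ G *ᵥ v = 3) (k : Fin 3) :
    (of fun i j => projOrth G v (Pi.single i 1) ⬝ᵥ G *ᵥ projOrth G v (Pi.single j 1)).adjugate k k
      = 27 * v k ^ 2 * G.det := by
  have key : (of fun i j => 9 * G i j - 3 * (G *ᵥ v) i * (G *ᵥ v) j).adjugate k k
      - 27 * v k ^ 2 * G.det = 27 * (3 - v ⬝ᵥ G *ᵥ v) * G.adjugate k k := by
    obtain ⟨a, b, c, d, e, f, rfl⟩ : ∃ a b c d e f, G = !![a, b, c; b, d, e; c, e, f] :=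
      ⟨G 0 0, G 0 1, G 0 2, G 1 1, G 1 2, G 2 2, by
        ext i j; fin_cases i <;> fin_cases j <;> simp [hG.apply 0 1, hG.apply 0 2, hG.apply 1 2]⟩
    fin_cases k <;>
    · simp [adjugate_fin_three, det_fin_three, mulVec, dotProduct, Fin.sum_univ_three]
      ring
  rw [hv, sub_self, mul_zero, zero_mul, sub_eq_zero] at key
  simpa only [projOrth_dotProduct_mulVec_projOrth hG hv, single_one_dotProduct, mulVec_single_one,
    col_apply] using key

theorem det_emod_four_eq_zero_or_one (G : Matrix (Fin 3) (Fin 3) ℤ) (hG : G.IsSymm)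
    {v : Fin 3 → ℤ} (hv : v ⬝ᵥ G *ᵥ v = 3)
    (heven : ∀ x, x ⬝ᵥ G *ᵥ v = 0 → Even (x ⬝ᵥ G *ᵥ x)) :
    G.det % 4 = 0 ∨ G.det % 4 = 1 := by
  obtain ⟨k, hk⟩ := exists_odd_of_not_four_dvd_dotProduct_mulVec G (v := v) (by rw [hv]; decide)
  have hminor := adjugate_gram_projOrth_single G hG hv k
  rw [adjugate_fin_succ_eq_det_submatrix, Even.neg_one_pow ⟨k, rfl⟩, one_mul, det_fin_two]
    at hminor
  simp only [submatrix_apply, of_apply] at hminor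
  obtain ⟨a, ha⟩ := heven _ (projOrth_dotProduct_mulVec hv (Pi.single (k.succAbove 0) 1))
  obtain ⟨b, hb⟩ := heven _ (projOrth_dotProduct_mulVec hv (Pi.single (k.succAbove 1) 1))
  rw [ha, hb, hG.dotProduct_mulVec_comm (projOrth G v (Pi.single (k.succAbove 1) 1))] at hminor
  set c := projOrth G v (Pi.single (k.succAbove 0) 1) ⬝ᵥ
    G *ᵥ projOrth G v (Pi.single (k.succAbove 1) 1)
  obtain ⟨s, hs⟩ : ∃ s, v k ^ 2 = 4 * s + 1 :=
    ⟨v k ^ 2 / 4, by have := Int.sq_mod_four_eq_one_of_odd hk; omega⟩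
  have hcd : c ^ 2 - G.det = 4 * (a * b - 27 * s * G.det - 7 * G.det) := by
    rw [hs] at hminor
    linear_combination -hminor
  rcases Int.sq_emod_four_eq_zero_or_one c with hc | hc <;> omega

end Matrix

theorem disc_rank_three_distinguished_mod_four
    {M : Type*} [AddCommGroup M] [Module ℤ M]
    (B : M →ₗ[ℤ] M →ₗ[ℤ] ℤ)
    (hsymm : ∀ x y : M, B x y = B y x)
    (o : M) (ho3 : B o o = 3)
    (hoEven : ∀ x : M, B x o = 0 → Even (B x x))
    (b : Module.Basis (Fin 3) ℤ M) :
    (Matrix.of fun i j => B (b i) (b j)).det % 4 = 0 ∨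
    (Matrix.of fun i j => B (b i) (b j)).det % 4 = 1 := by
  have hB (x y : M) : B x y = b.repr x ⬝ᵥ (of fun i j => B (b i) (b j)) *ᵥ b.repr y := by
    have hG : LinearMap.toMatrix₂ b b B = of fun i j => B (b i) (b j) := by ext; simp
    simpa [hG] using apply_eq_dotProduct_toMatrix₂_mulVec b b B x y
  refine det_emod_four_eq_zero_or_one _ (IsSymm.ext fun i j => hsymm _ _)
    (v := b.repr o) (by rw [← hB, ho3]) fun x hx => ?_
  have hrepr : ⇑(b.repr (b.equivFun.symm x)) = x := b.equivFun.apply_symm_apply x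
  have heven := hoEven (b.equivFun.symm x) (by rwa [hB, hrepr])
  rwa [hB, hrepr] at heven
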